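/- For a linear subspace W ⊆ R^n, κ_W equals the maximum over nonempty I ⊆ [n] and nonzero p ∈ π_I(W) of ‖L_I^W(p)‖_∞ / ‖p‖_1, where L_I^W(p) is the minimum-2-norm vector z ∈ W with z_I = p. -/

import Mathlib

open Finset

variable {ι : Type*} [Fintype ι] [DecidableEq ι]

/-- `y` conforms to `x` if `x i * y i > 0` whenever `y i ≠ 0`. -/
def Conforms (y x : ι → ℝ) : Prop := ∀ i, y i ≠ 0 → x i * y i > 0

/-- An elementary vector of `W`: a support-minimal nonzero vector of `W`. -/
def IsElementary (W : Submodule ℝ (ι → ℝ)) (g : ι → ℝ) : Prop :=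
  g ∈ W ∧ g ≠ 0 ∧
    ∀ h ∈ W, h ≠ 0 → {i | h i ≠ 0} ⊆ {i | g i ≠ 0} → {i | h i ≠ 0} = {i | g i ≠ 0}

/-- The fractional circuit imbalance measure `κ_W`. -/
noncomputable def kappa (W : Submodule ℝ (ι → ℝ)) : ℝ :=
  sSup ({1} ∪ {t : ℝ | ∃ g : ι → ℝ, IsElementary W g ∧
    ∃ i j, g i ≠ 0 ∧ g j ≠ 0 ∧ t = |g j| / |g i|})

/-- An integer elementary vector, normalized so that the gcd of its entries is 1. -/
def IsIntElementary (W : Submodule ℝ (ι → ℝ)) (g : ι → ℤ) : Prop :=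
  IsElementary W (fun i => (g i : ℝ)) ∧ Finset.univ.gcd (fun i => (g i).natAbs) = 1

/-- The max-circuit imbalance measure `κ̄_W`. -/
noncomputable def barKappa (W : Submodule ℝ (ι → ℝ)) : ℕ :=
  sSup {k : ℕ | ∃ g : ι → ℤ, IsIntElementary W g ∧
    k = Finset.univ.sup fun i => (g i).natAbs}

/-- The lcm-circuit imbalance measure `κ̇_W`: the least positive integer divisible by
every entry of every normalized integer elementary vector. -/
noncomputable def dotKappa (W : Submodule ℝ (ι → ℝ)) : ℕ :=
  sInf {k : ℕ | 0 < k ∧ ∀ g : ι → ℤ, IsIntElementary W g → ∀ i, g i ≠ 0 → (g i).natAbs ∣ k}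

/-- A rational linear subspace: one spanned by rational vectors. -/
def IsRationalSubspace (W : Submodule ℝ (ι → ℝ)) : Prop :=
  ∃ S : Set (ι → ℚ), W = Submodule.span ℝ ((fun v : ι → ℚ => fun i => ((v i : ℝ))) '' S)

/-- The orthogonal complement of `W` in `ℝ^ι` with the standard inner product. -/
def orthComp (W : Submodule ℝ (ι → ℝ)) : Submodule ℝ (ι → ℝ) where
  carrier := {v | ∀ w ∈ W, ∑ i, v i * w i = 0}
  add_mem' := by
    intro a b ha hb w hw
    have := ha w hw
    have := hb w hw
    simp only [Set.mem_setOf_eq, Pi.add_apply, add_mul, Finset.sum_add_distrib, *]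
    ring
  zero_mem' := by intro w hw; simp
  smul_mem' := by
    intro c a ha w hw
    have h := ha w hw
    simp only [Set.mem_setOf_eq, Pi.smul_apply, smul_eq_mul, mul_assoc, ← Finset.mul_sum, h,
      mul_zero]

/-!
Lower bound: an elementary vector `g` is the only vector of `W` that agrees with it on
`I = {i} ∪ (supp g)ᶜ`, so it is its own minimum-norm lift and `‖g‖_∞ / |g i|` is one of the
lifting ratios.

Upper bound: peel off from a minimum-norm lift `z` elementary vectors conforming to it. Each of
them meets `I`, since moving `z` along one that vanishes on `I` keeps `z_I` and decreases the
norm; so each piece `g` satisfies `|g l| ≤ κ_W ‖g_I‖₁`, and these bounds add up because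
conforming pieces never cancel.
-/

open Function

section

variable {α : Type*} {W : Submodule ℝ (α → ℝ)} {x y w z g h : α → ℝ}

namespace Conforms

theorem refl (x : α → ℝ) : Conforms x x := fun _ hi => mul_self_pos.mpr hi

theorem trans (hzy : Conforms z y) (hyx : Conforms y x) : Conforms z x := by
  intro i hi
  have hyz := hzy i hi
  have hxy := hyx i fun h0 => by simp [h0] at hyz
  nlinarith [mul_pos hxy hyz, sq_nonneg (y i)]

theorem support_subset (hyx : Conforms y x) : support y ⊆ support x := fun i hi hx => by
  simpa [hx] using hyx i hi

theorem smul (hyx : Conforms y x) {c : ℝ} (hc : 0 < c) : Conforms (c • y) x := by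
  intro i hi
  have hyi : y i ≠ 0 := right_ne_zero_of_mul hi
  simpa [mul_left_comm] using mul_pos hc (hyx i hyi)

theorem abs_add (hyx : Conforms y x) (hwx : Conforms w x) (i : α) :
    |y i + w i| = |y i| + |w i| := by
  rcases eq_or_ne (y i) 0 with hy | hy
  · simp [hy]
  rcases eq_or_ne (w i) 0 with hw | hw
  · simp [hw]
  have hyw : 0 < y i * w i := by
    nlinarith [mul_pos (hyx i hy) (hwx i hw), sq_nonneg (x i)]
  exact (abs_add_eq_add_abs_iff _ _).mpr <|
    (mul_pos_iff.mp hyw).imp (fun h => ⟨h.1.le, h.2.le⟩) fun h => ⟨h.1.le, h.2.le⟩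

theorem sum_mul_pos [Fintype α] (hyx : Conforms y x) (hy : y ≠ 0) : 0 < ∑ i, x i * y i := by
  obtain ⟨i, hi⟩ := Function.ne_iff.mp hy
  refine Finset.sum_pos' (fun j _ => ?_) ⟨i, Finset.mem_univ _, hyx i hi⟩
  rcases eq_or_ne (y j) 0 with hj | hj
  · simp [hj]
  · exact (hyx j hj).le

end Conforms

/-- The step of the conformal decomposition: subtract from `z` the largest multiple of `h` that
keeps it conforming; this kills a coordinate of `z`. -/
theorem exists_pos_conforms_sub_smul [Fintype α] (hsub : support h ⊆ support z)
    (hpos : ∃ i, 0 < z i * h i) :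
    ∃ c : ℝ, 0 < c ∧ Conforms (z - c • h) z ∧ support (z - c • h) ⊂ support z := by
  classical
  obtain ⟨i₀, hi₀, hmin⟩ := (Finset.univ.filter fun i => 0 < z i * h i).exists_min_image
    (fun i => z i / h i) (by simpa [Finset.Nonempty] using hpos)
  simp only [Finset.mem_filter, Finset.mem_univ, true_and] at hi₀ hmin
  have hh₀ : h i₀ ≠ 0 := right_ne_zero_of_mul hi₀.ne'
  have hc : 0 < z i₀ / h i₀ := by
    rw [← mul_div_mul_right _ _ hh₀]
    exact div_pos hi₀ (mul_self_pos.mpr hh₀)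
  have hconf : Conforms (z - (z i₀ / h i₀) • h) z := by
    intro i hi
    simp only [Pi.sub_apply, Pi.smul_apply, smul_eq_mul] at hi ⊢
    have hzi : z i ≠ 0 := fun hz => hi (by simp [hz, notMem_support.mp fun h' => hsub h' hz])
    by_cases hzh : 0 < z i * h i
    · have hle := mul_le_mul_of_nonneg_right (hmin i hzh) hzh.le
      rw [show z i / h i * (z i * h i) = z i * z i by
        field_simp [right_ne_zero_of_mul hzh.ne']] at hle
      exact lt_of_le_of_ne (by nlinarith) (mul_ne_zero hzi hi).symm
    · nlinarith [mul_self_pos.mpr hzi]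
  refine ⟨_, hc, hconf, (Set.ssubset_iff_of_subset hconf.support_subset).mpr
    ⟨i₀, left_ne_zero_of_mul hi₀.ne', ?_⟩⟩
  simp [div_mul_cancel₀ _ hh₀]

theorem IsElementary.eq_smul_of_support_subset (hg : IsElementary W g) (hh : h ∈ W)
    (hsub : support h ⊆ support g) : ∃ c : ℝ, h = c • g := by
  obtain ⟨hgW, hg0, hmin⟩ := hg
  obtain ⟨i, hi⟩ := Function.ne_iff.mp hg0
  refine ⟨h i / g i, by_contra fun hne => ?_⟩
  have hsupp := hmin _ (W.sub_mem hh (W.smul_mem (h i / g i) hgW)) (sub_ne_zero.mpr hne)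
    ((support_sub _ _).trans (Set.union_subset hsub (support_const_smul_subset _ _)))
  have hi' : i ∈ support (h - (h i / g i) • g) := (Set.ext_iff.mp hsupp i).mpr hi
  simp [div_mul_cancel₀ _ hi] at hi'

theorem exists_isElementary_conforms [Fintype α] (hz : z ∈ W) (hz0 : z ≠ 0) :
    ∃ g, IsElementary W g ∧ Conforms g z := by
  induction' hn : (support z).ncard using Nat.strong_induction_on with n ih generalizing z
  by_cases hel : IsElementary W z
  · exact ⟨z, hel, Conforms.refl z⟩
  obtain ⟨h, hhW, hsub, ⟨j, hzj, hhj⟩, hpos⟩ : ∃ h ∈ W, support h ⊆ support z ∧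
      (∃ j ∈ support z, h j = 0) ∧ ∃ i, 0 < z i * h i := by
    simp only [IsElementary, not_and, not_forall] at hel
    obtain ⟨h, hhW, hh0, hsub, hne⟩ := hel hz hz0
    obtain ⟨j, hzj, hhj⟩ := Set.exists_of_ssubset (LE.le.ssubset_of_ne hsub hne)
    obtain ⟨i, hi⟩ := Function.ne_iff.mp hh0
    rcases (mul_ne_zero (hsub hi) hi).lt_or_gt with hneg | hpos
    · exact ⟨-h, W.neg_mem hhW, by simpa using hsub, ⟨j, hzj, by simpa using hhj⟩, i,
        by simpa using hneg⟩
    · exact ⟨h, hhW, hsub, ⟨j, hzj, by simpa using hhj⟩, i, hpos⟩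
  obtain ⟨c, -, hconf, hlt⟩ := exists_pos_conforms_sub_smul hsub hpos
  obtain ⟨g, hg, hgconf⟩ := ih _ (hn ▸ Set.ncard_lt_ncard hlt)
    (W.sub_mem hz (W.smul_mem c hhW)) (Function.ne_iff.mpr ⟨j, by simpa [hhj] using hzj⟩) rfl
  exact ⟨g, hg, hgconf.trans hconf⟩

theorem bddAbove_circuitRatios [Finite α] (W : Submodule ℝ (α → ℝ)) :
    BddAbove ({1} ∪ {t : ℝ | ∃ g : α → ℝ, IsElementary W g ∧
      ∃ i j, g i ≠ 0 ∧ g j ≠ 0 ∧ t = |g j| / |g i|}) := by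
  refine ((Set.finite_singleton 1).union ?_).bddAbove
  have hcover : {t : ℝ | ∃ g : α → ℝ, IsElementary W g ∧
      ∃ i j, g i ≠ 0 ∧ g j ≠ 0 ∧ t = |g j| / |g i|} ⊆ ⋃ (S : Set α) (i : α) (j : α),
      {t | ∃ g, IsElementary W g ∧ support g = S ∧ t = |g j| / |g i|} := by
    rintro _ ⟨g, hg, i, j, -, -, rfl⟩
    simp only [Set.mem_iUnion]
    exact ⟨support g, i, j, g, hg, rfl, rfl⟩
  refine Set.Finite.subset (Set.finite_iUnion fun S => Set.finite_iUnion fun i =>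
    Set.finite_iUnion fun j => Set.Subsingleton.finite ?_) hcover
  rintro _ ⟨g, hg, rfl, rfl⟩ _ ⟨g', hg', hsupp, rfl⟩
  obtain ⟨c, rfl⟩ := hg.eq_smul_of_support_subset hg'.1 hsupp.le
  have hc : c ≠ 0 := left_ne_zero_of_smul hg'.2.1
  simp only [Pi.smul_apply, smul_eq_mul, abs_mul]
  exact (mul_div_mul_left _ _ (abs_ne_zero.mpr hc)).symm

theorem one_le_kappa [Finite α] (W : Submodule ℝ (α → ℝ)) : 1 ≤ kappa W :=
  le_csSup (bddAbove_circuitRatios W) (Or.inl rfl)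

theorem kappa_nonneg [Finite α] (W : Submodule ℝ (α → ℝ)) : 0 ≤ kappa W :=
  zero_le_one.trans (one_le_kappa W)

theorem IsElementary.abs_le_kappa_mul_abs [Finite α] (hg : IsElementary W g) {i : α}
    (hi : g i ≠ 0) (j : α) : |g j| ≤ kappa W * |g i| := by
  rcases eq_or_ne (g j) 0 with hj | hj
  · simpa [hj] using mul_nonneg (kappa_nonneg W) (abs_nonneg (g i))
  exact (div_le_iff₀ (abs_pos.mpr hi)).mp
    (le_csSup (bddAbove_circuitRatios W) (Or.inr ⟨g, hg, i, j, hi, hj, rfl⟩))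

theorem abs_le_kappa_mul_sum_abs [Fintype α] (I : Finset α) (hz : z ∈ W)
    (hI : ∀ g, IsElementary W g → Conforms g z → ∃ i ∈ I, g i ≠ 0) (l : α) :
    |z l| ≤ kappa W * ∑ i ∈ I, |z i| := by
  induction' hn : (support z).ncard using Nat.strong_induction_on with n ih generalizing z
  rcases eq_or_ne z 0 with rfl | hz0
  · simp
  obtain ⟨g, hg, hgz⟩ := exists_isElementary_conforms hz hz0
  obtain ⟨i, hi⟩ := Function.ne_iff.mp hg.2.1
  obtain ⟨c, hc, hconf, hlt⟩ := exists_pos_conforms_sub_smul hgz.support_subset ⟨i, hgz i hi⟩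
  have hsplit : ∀ k, |z k| = |(z - c • g) k| + c * |g k| := fun k => by
    simpa [abs_mul, abs_of_pos hc] using hconf.abs_add (hgz.smul hc) k
  have hrest := ih _ (hn ▸ Set.ncard_lt_ncard hlt) (W.sub_mem hz (W.smul_mem c hg.1))
    (fun g' hg' hg'z => hI g' hg' (hg'z.trans hconf)) rfl
  obtain ⟨j, hj, hgj⟩ := hI g hg hgz
  have hpiece : |g l| ≤ kappa W * ∑ i ∈ I, |g i| :=
    (hg.abs_le_kappa_mul_abs hgj l).trans <| mul_le_mul_of_nonneg_left
      (Finset.single_le_sum (fun i _ => abs_nonneg (g i)) hj) (kappa_nonneg W)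
  calc |z l| = |(z - c • g) l| + c * |g l| := hsplit l
    _ ≤ kappa W * ∑ i ∈ I, |(z - c • g) i| + c * (kappa W * ∑ i ∈ I, |g i|) := by gcongr
    _ = kappa W * ∑ i ∈ I, |z i| := by
      rw [Finset.sum_congr rfl fun i _ => hsplit i, Finset.sum_add_distrib, ← Finset.mul_sum]
      ring

/-- First-order optimality of a minimum-norm lift. -/
theorem sum_mul_eq_zero_of_forall_sum_sq_le [Fintype α] {I : Finset α} (hz : z ∈ W)
    (hmin : ∀ z' ∈ W, (∀ i ∈ I, z' i = z i) → ∑ l, z l ^ 2 ≤ ∑ l, z' l ^ 2)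
    (hh : h ∈ W) (hhI : ∀ i ∈ I, h i = 0) : ∑ l, z l * h l = 0 := by
  set c := ∑ l, z l * h l
  set d := ∑ l, h l ^ 2
  have hd : 0 ≤ d := Finset.sum_nonneg fun _ _ => sq_nonneg _
  have hexp : ∀ t : ℝ, ∑ l, (z - t • h) l ^ 2 = ∑ l, z l ^ 2 - 2 * t * c + t ^ 2 * d := by
    intro t
    simp only [Pi.sub_apply, Pi.smul_apply, smul_eq_mul, c, d, Finset.mul_sum,
      ← Finset.sum_sub_distrib, ← Finset.sum_add_distrib]
    exact Finset.sum_congr rfl fun _ _ => by ring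
  have hle := hmin _ (W.sub_mem hz (W.smul_mem (c / (d + 1)) hh)) fun i hi => by simp [hhI i hi]
  rw [hexp] at hle
  have hsq : c ^ 2 * (d + 2) ≤ 0 := by
    field_simp at hle
    nlinarith
  exact pow_eq_zero_iff two_ne_zero |>.mp <|
    le_antisymm (nonpos_of_mul_nonpos_left hsq (by linarith)) (sq_nonneg c)

theorem exists_mem_ne_zero_of_conforms [Fintype α] {I : Finset α} (hz : z ∈ W)
    (hmin : ∀ z' ∈ W, (∀ i ∈ I, z' i = z i) → ∑ l, z l ^ 2 ≤ ∑ l, z' l ^ 2)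
    (hh : h ∈ W) (hhz : Conforms h z) (hh0 : h ≠ 0) : ∃ i ∈ I, h i ≠ 0 := by
  by_contra! hhI
  exact (hhz.sum_mul_pos hh0).ne' (sum_mul_eq_zero_of_forall_sum_sq_le hz hmin hh hhI)

/-- The ratios `‖L_I^W(p)‖_∞ / ‖p‖₁`, indexed by the lift `z = L_I^W(p)` itself. -/
def liftingRatios [Fintype α] (W : Submodule ℝ (α → ℝ)) : Set ℝ :=
  {t : ℝ | ∃ I : Finset α, I.Nonempty ∧
    ∃ z : α → ℝ, z ∈ W ∧ (∃ i ∈ I, z i ≠ 0) ∧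
      (∀ z' : α → ℝ, z' ∈ W → (∀ i ∈ I, z' i = z i) →
        ∑ l, z l ^ 2 ≤ ∑ l, z' l ^ 2) ∧
      t = (⨆ l, |z l|) / ∑ i ∈ I, |z i|}

theorem le_kappa_of_mem_liftingRatios [Fintype α] {t : ℝ} (ht : t ∈ liftingRatios W) :
    t ≤ kappa W := by
  obtain ⟨I, -, z, hz, ⟨i₀, hi₀, hzi₀⟩, hmin, rfl⟩ := ht
  have hpos : 0 < ∑ i ∈ I, |z i| :=
    (abs_pos.mpr hzi₀).trans_le (Finset.single_le_sum (fun i _ => abs_nonneg (z i)) hi₀)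
  have : Nonempty α := ⟨i₀⟩
  rw [div_le_iff₀ hpos]
  exact ciSup_le <| abs_le_kappa_mul_sum_abs I hz fun g hg hgz =>
    exists_mem_ne_zero_of_conforms hz hmin hg.1 hgz hg.2.1

theorem IsElementary.iSup_abs_div_abs_mem_liftingRatios [Fintype α] (hg : IsElementary W g)
    {i : α} (hi : g i ≠ 0) : (⨆ l, |g l|) / |g i| ∈ liftingRatios W := by
  classical
  refine ⟨insert i (Finset.univ.filter fun l => g l = 0), Finset.insert_nonempty _ _, g, hg.1,
    ⟨i, Finset.mem_insert_self _ _, hi⟩, fun z' hz' hagree => ?_, ?_⟩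
  · obtain ⟨c, hc⟩ := hg.eq_smul_of_support_subset hz' fun l hl hgl =>
      hl ((hagree l (by simp [hgl])).trans hgl)
    have hc1 : c = 1 := by
      have := hagree i (Finset.mem_insert_self _ _)
      rw [hc, Pi.smul_apply, smul_eq_mul] at this
      exact mul_eq_right₀ hi |>.mp this
    rw [hc, hc1, one_smul]
  · rw [Finset.sum_insert (by simp [hi]), Finset.sum_eq_zero fun l hl => by
      simp [(Finset.mem_filter.mp hl).2], add_zero]

theorem bddAbove_liftingRatios [Fintype α] (W : Submodule ℝ (α → ℝ)) :
    BddAbove (liftingRatios W) :=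
  ⟨kappa W, fun _ => le_kappa_of_mem_liftingRatios⟩

theorem IsElementary.abs_div_abs_le_sSup_liftingRatios [Fintype α] (hg : IsElementary W g)
    {i : α} (hi : g i ≠ 0) (j : α) : |g j| / |g i| ≤ sSup (liftingRatios W) :=
  (div_le_div_of_nonneg_right (le_ciSup (Set.finite_range fun l => |g l|).bddAbove j)
    (abs_nonneg _)).trans
    (le_csSup (bddAbove_liftingRatios W) (hg.iSup_abs_div_abs_mem_liftingRatios hi))

end

/-- `κ_W` equals the maximum over nonempty `I` and nonzero `p ∈ π_I(W)` of
`‖L_I^W(p)‖_∞ / ‖p‖_1`, where `L_I^W(p)` is the minimum-2-norm vector `z ∈ W` with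
`z_I = p`. -/
theorem kappa_eq_lifting {n : ℕ} (W : Submodule ℝ (Fin n → ℝ)) (hW : W ≠ ⊥) :
    kappa W = sSup {t : ℝ | ∃ I : Finset (Fin n), I.Nonempty ∧
      ∃ z : Fin n → ℝ, z ∈ W ∧ (∃ i ∈ I, z i ≠ 0) ∧
        (∀ z' : Fin n → ℝ, z' ∈ W → (∀ i ∈ I, z' i = z i) →
          ∑ l, z l ^ 2 ≤ ∑ l, z' l ^ 2) ∧
        t = (⨆ l, |z l|) / ∑ i ∈ I, |z i|} := by
  change kappa W = sSup (liftingRatios W)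
  refine le_antisymm (csSup_le ⟨1, Or.inl rfl⟩ ?_)
    (Real.sSup_le (fun _ => le_kappa_of_mem_liftingRatios) (kappa_nonneg W))
  rintro t (rfl | ⟨g, hg, i, j, hi, -, rfl⟩)
  · obtain ⟨z, hz, hz0⟩ := Submodule.exists_mem_ne_zero_of_ne_bot hW
    obtain ⟨g, hg, -⟩ := exists_isElementary_conforms hz hz0
    obtain ⟨i, hi⟩ := Function.ne_iff.mp hg.2.1
    exact (div_self (abs_ne_zero.mpr hi)).ge.trans
      (hg.abs_div_abs_le_sSup_liftingRatios hi i)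
  · exact hg.abs_div_abs_le_sSup_liftingRatios hi j
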